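/- arXiv:2404.00709 — 2 statements merged into one kernel-verified Lean document; each statement's English description precedes it below -/
import Mathlib

section
/- Let ε ∈ (0,1] and let a : [1,∞) → ℝ be differentiable with a(1) = 0 and a'(x) − a(x)/(2x) = exp((2/ε²)(x−1))/x for x ≥ 1. Then a(x) = (exp((2/ε²)(x−1))/x) · ∫₁ˣ (x/y)^{3/2} exp((2/ε²)(y−x)) dy, and there is a universal constant C such that a(x) ≤ C ε² exp((2/ε²)(x−1))/x for all x ≥ 1. -/
theorem stmt_9 :
    ∃ C : ℝ, 0 < C ∧
      ∀ ε : ℝ, 0 < ε → ε ≤ 1 →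
        ∀ a : ℝ → ℝ, a 1 = 0 →
          (∀ x ≥ (1:ℝ), HasDerivAt a (a x / (2 * x) + Real.exp ((2 / ε ^ 2) * (x - 1)) / x) x) →
          ∀ x ≥ (1:ℝ),
            a x = (Real.exp ((2 / ε ^ 2) * (x - 1)) / x) *
              ∫ y in (1:ℝ)..x, (x / y) ^ ((3:ℝ)/2) * Real.exp ((2 / ε ^ 2) * (y - x)) ∧
            a x ≤ C * ε ^ 2 * Real.exp ((2 / ε ^ 2) * (x - 1)) / x := by
  refine ⟨2, two_pos, ?_⟩
  intro ε hε hε1 a ha1 hderiv x hx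
  set k : ℝ := 2 / ε ^ 2 with hkdef
  have hε2 : (0:ℝ) < ε ^ 2 := by positivity
  have hkpos : 0 < k := by positivity
  have hk2 : 2 ≤ k := by
    rw [hkdef, le_div_iff₀ hε2]
    nlinarith
  have hx0 : (0:ℝ) < x := lt_of_lt_of_le one_pos hx
  -- normalized integrand
  set f : ℝ → ℝ := fun t => Real.exp (k * (t - 1)) / (t * Real.sqrt t) with hfdef
  -- derivative of a t / √t
  have key : ∀ t ∈ Set.uIcc (1:ℝ) x,
      HasDerivAt (fun s => a s / Real.sqrt s) (f t) t := by
    intro t ht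
    rw [Set.uIcc_of_le hx] at ht
    have ht1 : (1:ℝ) ≤ t := ht.1
    have ht0 : (0:ℝ) < t := lt_of_lt_of_le one_pos ht1
    have hst : (0:ℝ) < Real.sqrt t := Real.sqrt_pos.mpr ht0
    have h1 := hderiv t ht1
    have h2 : HasDerivAt Real.sqrt (1 / (2 * Real.sqrt t)) t :=
      Real.hasDerivAt_sqrt (ne_of_gt ht0)
    have h3 := h1.div h2 (ne_of_gt hst)
    refine h3.congr_deriv ?_
    symm
    have hsq : Real.sqrt t * Real.sqrt t = t := Real.mul_self_sqrt ht0.le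
    rw [hfdef]
    field_simp
    linear_combination (-a t) * hsq
  have hcontf : ContinuousOn f (Set.uIcc (1:ℝ) x) := by
    apply ContinuousOn.div
    · exact (Real.continuous_exp.comp (continuous_const.mul (continuous_id.sub continuous_const))).continuousOn
    · exact (continuous_id.continuousOn).mul Real.continuous_sqrt.continuousOn
    · intro t ht
      rw [Set.uIcc_of_le hx] at ht
      have ht0 : (0:ℝ) < t := lt_of_lt_of_le one_pos ht.1
      positivity
  have hFTC := intervalIntegral.integral_eq_sub_of_hasDerivAt key hcontf.intervalIntegrable
  have hax : a x = Real.sqrt x * ∫ t in (1:ℝ)..x, f t := by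
    rw [hFTC, ha1]
    have hsx : (0:ℝ) < Real.sqrt x := Real.sqrt_pos.mpr hx0
    field_simp
    simp
  -- rewrite the stated integral
  have hcong : (∫ y in (1:ℝ)..x, (x / y) ^ ((3:ℝ)/2) * Real.exp (k * (y - x)))
      = (x * Real.sqrt x * Real.exp (-(k * (x - 1)))) * ∫ t in (1:ℝ)..x, f t := by
    rw [← intervalIntegral.integral_const_mul]
    apply intervalIntegral.integral_congr
    intro y hy
    rw [Set.uIcc_of_le hx] at hy
    have hy1 : (1:ℝ) ≤ y := hy.1
    have hy0 : (0:ℝ) < y := lt_of_lt_of_le one_pos hy1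
    have hxy : (0:ℝ) < x / y := div_pos hx0 hy0
    have h32 : ((3:ℝ)/2) = 1 + 1/2 := by norm_num
    have hrw : (x / y) ^ ((3:ℝ)/2) = (x / y) * Real.sqrt (x / y) := by
      rw [h32, Real.rpow_add hxy, Real.rpow_one, ← Real.sqrt_eq_rpow]
    show (x / y) ^ ((3:ℝ)/2) * Real.exp (k * (y - x))
        = x * Real.sqrt x * Real.exp (-(k * (x - 1))) * f y
    rw [hrw, Real.sqrt_div hx0.le, hfdef]
    have hsy : (0:ℝ) < Real.sqrt y := Real.sqrt_pos.mpr hy0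
    have hsx : (0:ℝ) < Real.sqrt x := Real.sqrt_pos.mpr hx0
    show x / y * (Real.sqrt x / Real.sqrt y) * Real.exp (k * (y - x))
        = x * Real.sqrt x * Real.exp (-(k * (x - 1))) * (Real.exp (k * (y - 1)) / (y * Real.sqrt y))
    have hee : Real.exp (-(k * (x - 1))) * Real.exp (k * (y - 1)) = Real.exp (k * (y - x)) := by
      rw [← Real.exp_add]; congr 1; ring
    rw [← hee]
    field_simp
  have hEx : (0:ℝ) < Real.exp (k * (x - 1)) / x := div_pos (Real.exp_pos _) hx0
  have hmain : a x = (Real.exp (k * (x - 1)) / x) *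
      ∫ y in (1:ℝ)..x, (x / y) ^ ((3:ℝ)/2) * Real.exp (k * (y - x)) := by
    rw [hcong, hax, Real.exp_neg]
    have hE : Real.exp (k * (x - 1)) ≠ 0 := (Real.exp_pos _).ne'
    field_simp
  refine ⟨hmain, ?_⟩
  -- bound the integral
  have hbound : (∫ y in (1:ℝ)..x, (x / y) ^ ((3:ℝ)/2) * Real.exp (k * (y - x))) ≤ 2 * ε ^ 2 := by
    have hmono : (∫ y in (1:ℝ)..x, (x / y) ^ ((3:ℝ)/2) * Real.exp (k * (y - x)))
        ≤ ∫ y in (1:ℝ)..x, Real.exp ((k/4) * (y - x)) := by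
      apply intervalIntegral.integral_mono_on hx
      · apply ContinuousOn.intervalIntegrable
        apply ContinuousOn.mul
        · apply ContinuousOn.rpow_const
          · exact (continuousOn_const.div continuousOn_id (by
              intro t ht
              rw [Set.uIcc_of_le hx] at ht
              exact (lt_of_lt_of_le one_pos ht.1).ne'))
          · intro t ht
            rw [Set.uIcc_of_le hx] at ht
            exact Or.inl (ne_of_gt (div_pos hx0 (lt_of_lt_of_le one_pos ht.1)))
        · exact (Real.continuous_exp.comp (continuous_const.mul (continuous_id.sub continuous_const))).continuousOn
      · apply ContinuousOn.intervalIntegrable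
        exact (Real.continuous_exp.comp (continuous_const.mul (continuous_id.sub continuous_const))).continuousOn
      · intro y hy
        have hy1 : (1:ℝ) ≤ y := hy.1
        have hy0 : (0:ℝ) < y := lt_of_lt_of_le one_pos hy1
        have hyx : y ≤ x := hy.2
        have hxy : (0:ℝ) < x / y := div_pos hx0 hy0
        have hlog : Real.log (x / y) ≤ x - y := by
          have h1 : Real.log (x / y) ≤ x / y - 1 := Real.log_le_sub_one_of_pos hxy
          have h2 : x / y - 1 ≤ x - y := by
            rw [div_sub_one hy0.ne']
            rw [div_le_iff₀ hy0]
            nlinarith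
          linarith
        have h1 : (x / y) ^ ((3:ℝ)/2) ≤ Real.exp ((3/2) * (x - y)) := by
          rw [Real.rpow_def_of_pos hxy]
          apply Real.exp_le_exp.mpr
          have : (0:ℝ) ≤ (3:ℝ)/2 := by norm_num
          calc Real.log (x / y) * (3/2) ≤ (x - y) * (3/2) := by nlinarith
            _ = (3/2) * (x - y) := by ring
        calc (x / y) ^ ((3:ℝ)/2) * Real.exp (k * (y - x))
            ≤ Real.exp ((3/2) * (x - y)) * Real.exp (k * (y - x)) := by
              apply mul_le_mul_of_nonneg_right h1 (Real.exp_pos _).le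
          _ = Real.exp ((3/2) * (x - y) + k * (y - x)) := (Real.exp_add _ _).symm
          _ ≤ Real.exp ((k/4) * (y - x)) := by
              apply Real.exp_le_exp.mpr
              nlinarith
    have hcomp : (∫ y in (1:ℝ)..x, Real.exp ((k/4) * (y - x)))
        = (fun y => (4/k) * Real.exp ((k/4) * (y - x))) x
          - (fun y => (4/k) * Real.exp ((k/4) * (y - x))) 1 := by
      refine intervalIntegral.integral_eq_sub_of_hasDerivAt
        (f := fun y => (4/k) * Real.exp ((k/4) * (y - x))) ?_ ?_
      · intro t _
        have h : HasDerivAt (fun y : ℝ => (4/k) * Real.exp ((k/4) * (y - x)))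
            ((4/k) * (Real.exp ((k/4) * (t - x)) * ((k/4) * 1))) t := by
          exact (((hasDerivAt_id t).sub_const x).const_mul (k/4)).exp.const_mul (4/k)
        refine h.congr_deriv ?_
        rw [show (4/k) * (Real.exp ((k/4) * (t - x)) * ((k/4) * 1)) = Real.exp ((k/4) * (t - x)) * ((4/k) * (k/4)) by ring,
          show (4/k) * (k/4) = (1:ℝ) by rw [div_mul_div_comm, mul_comm 4 k, div_self (by positivity)], mul_one]
      · apply ContinuousOn.intervalIntegrable
        exact (Real.continuous_exp.comp (continuous_const.mul (continuous_id.sub continuous_const))).continuousOn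
    have h4k : 4 / k = 2 * ε ^ 2 := by
      rw [hkdef]
      field_simp
      ring
    have : (∫ y in (1:ℝ)..x, Real.exp ((k/4) * (y - x))) ≤ 4/k := by
      rw [hcomp]
      simp only
      have he1 : Real.exp ((k/4) * (x - x)) = 1 := by
        simp
      rw [he1]
      have : 0 ≤ (4/k) * Real.exp ((k/4) * (1 - x)) := by positivity
      have h4 : 0 < 4/k := by positivity
      linarith
    linarith [h4k ▸ this, hmono]
  calc a x = (Real.exp (k * (x - 1)) / x) *
        ∫ y in (1:ℝ)..x, (x / y) ^ ((3:ℝ)/2) * Real.exp (k * (y - x)) := hmain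
    _ ≤ (Real.exp (k * (x - 1)) / x) * (2 * ε ^ 2) := by
        apply mul_le_mul_of_nonneg_left hbound hEx.le
    _ = 2 * ε ^ 2 * Real.exp (k * (x - 1)) / x := by ring
end

section
/- Let ε ∈ (0,1], C ≥ 0, and let b : [1,∞) → ℝ be differentiable with b(1) = 0 and b'(x) − b(x)/x ≤ C exp((2/ε²)(x−1)) for all x ≥ 1. Then b(x) ≤ C' ε² exp((2/ε²)(x−1)) for all x ≥ 1, where C' depends only on C. -/
theorem stmt_11 (C : ℝ) (hC : 0 ≤ C) :
    ∃ C' : ℝ,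
      ∀ ε : ℝ, 0 < ε → ε ≤ 1 →
        ∀ b db : ℝ → ℝ, b 1 = 0 →
          (∀ x ≥ (1:ℝ), HasDerivAt b (db x) x) →
          (∀ x ≥ (1:ℝ), db x - b x / x ≤ C * Real.exp ((2 / ε ^ 2) * (x - 1))) →
          ∀ x ≥ (1:ℝ), b x ≤ C' * ε ^ 2 * Real.exp ((2 / ε ^ 2) * (x - 1)) := by
  refine ⟨C, fun ε hε hε1 b db hb1 hderiv hineq x hx => ?_⟩
  have hε2 : (0:ℝ) < ε ^ 2 := by positivity
  set k : ℝ := 2 / ε ^ 2 with hk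
  have hkpos : 0 < k := by positivity
  set f : ℝ → ℝ := fun x => (C * ε ^ 2 * Real.exp (k * (x - 1)) - b x) / x with hf
  set f' : ℝ → ℝ := fun y =>
    ((C * ε ^ 2 * (Real.exp (k * (y - 1)) * k) - db y) * y
      - (C * ε ^ 2 * Real.exp (k * (y - 1)) - b y) * 1) / y ^ 2 with hf'
  have hfd : ∀ y ∈ Set.Ici (1:ℝ), HasDerivAt f (f' y) y := by
    intro y hy
    have hy1 : (1:ℝ) ≤ y := hy
    have hy0 : y ≠ 0 := by linarith
    have he : HasDerivAt (fun x : ℝ => Real.exp (k * (x - 1)))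
        (Real.exp (k * (y - 1)) * k) y := by
      have h1 : HasDerivAt (fun x : ℝ => k * (x - 1)) k y := by
        simpa using ((hasDerivAt_id y).sub_const 1).const_mul k
      simpa using h1.exp
    have h2 : HasDerivAt (fun x => C * ε ^ 2 * Real.exp (k * (x - 1)) - b x)
        (C * ε ^ 2 * (Real.exp (k * (y - 1)) * k) - db y) y :=
      (he.const_mul _).sub (hderiv y hy1)
    exact h2.div (hasDerivAt_id y) hy0
  have hf'nonneg : ∀ y ∈ Set.Ici (1:ℝ), 0 ≤ f' y := by
    intro y hy
    have hy1 : (1:ℝ) ≤ y := hy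
    have hy0 : (0:ℝ) < y := by linarith
    have hE : 0 < Real.exp (k * (y - 1)) := Real.exp_pos _
    have hineqy := hineq y hy1
    -- db y ≤ C * exp + b y / y
    have hdb : db y * y ≤ C * Real.exp (k * (y - 1)) * y + b y := by
      have := (sub_le_iff_le_add.mp hineqy)
      have h3 : db y * y ≤ (C * Real.exp (k * (y - 1)) + b y / y) * y :=
        mul_le_mul_of_nonneg_right this hy0.le
      calc db y * y ≤ (C * Real.exp (k * (y - 1)) + b y / y) * y := h3
        _ = C * Real.exp (k * (y - 1)) * y + b y := by field_simp
    have hnum : 0 ≤ (C * ε ^ 2 * (Real.exp (k * (y - 1)) * k) - db y) * y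
        - (C * ε ^ 2 * Real.exp (k * (y - 1)) - b y) * 1 := by
      have hkmul : C * ε ^ 2 * (Real.exp (k * (y - 1)) * k)
          = 2 * C * Real.exp (k * (y - 1)) := by
        rw [hk]; field_simp
      have hgoal : C * Real.exp (k * (y - 1)) * (y - ε ^ 2) ≥ 0 := by
        have : 0 ≤ y - ε ^ 2 := by nlinarith [sq_nonneg ε]
        positivity
      nlinarith [hgoal, hdb]
    have : 0 ≤ ((C * ε ^ 2 * (Real.exp (k * (y - 1))  * k) - db y) * y
        - (C * ε ^ 2 * Real.exp (k * (y - 1)) - b y) * 1) / y ^ 2 := by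
      apply div_nonneg hnum (by positivity)
    simpa [hf'] using this
  have hmono : MonotoneOn f (Set.Ici (1:ℝ)) := by
    apply monotoneOn_of_hasDerivWithinAt_nonneg (convex_Ici 1)
      (fun y hy => (hfd y hy).continuousAt.continuousWithinAt)
      (fun y hy => ((hfd y (interior_subset hy)).hasDerivWithinAt))
      (fun y hy => hf'nonneg y (interior_subset hy))
  have h1mem : (1:ℝ) ∈ Set.Ici (1:ℝ) := Set.mem_Ici.mpr le_rfl
  have hxmem : x ∈ Set.Ici (1:ℝ) := hx
  have hfx := hmono h1mem hxmem hx
  have hf1 : f 1 = C * ε ^ 2 := by simp [hf, hb1]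
  have hx0 : (0:ℝ) < x := by linarith
  have hfx0 : 0 ≤ f x := le_trans (by positivity) (hf1 ▸ hfx)
  have hnum : 0 ≤ C * ε ^ 2 * Real.exp (k * (x - 1)) - b x := by
    simp only [hf] at hfx0
    have h := mul_nonneg hfx0 hx0.le
    rwa [div_mul_cancel₀ _ hx0.ne'] at h
  linarith
end
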